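/- Let s and t be nonzero real numbers with s < 0 < t ≤ 3/2 − s. Then for all positive real numbers a ≠ b, s/t < (M_s(a,b) − G(a,b))/(M_t(a,b) − G(a,b)) < 0. -/

import Mathlib

/-!
Write `{a, b} = {G e^u, G e^(-u)}` with `G = √(ab)` and `u > 0`. Then
`M_r(a, b) = G · cosh(r u)^(1/r)`, which gives `M_s < G < M_t`, and the lower bound says that
`Φ(v) = t (cosh(s v)^(1/s) - 1) - s (cosh(t v)^(1/t) - 1)` is positive at `u`. As `Φ(0) = 0`,
it suffices that `Φ' > 0`; with `p = -s` and after taking logarithms this is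
`Λ(t v) - Λ(p v) < v (ĉ(t v) + ĉ(p v))`, where `Λ(w) = log (w / tanh w)` and
`ĉ(w) = log (cosh w) / w`. For `t ≤ p` it holds because `Λ` is increasing. For `p < t` it
follows from `t - p ≤ 3/2` and the bound `Λ(z) - Λ(y) < 2/3 (z - y) (ĉ(y) + ĉ(z))`, obtained
by differentiating in `z`: `ĉ` is concave with `ĉ(y) ≥ y ĉ'(y)`, so the derivative of the
right side is at least `2/3 tanh z`, which exceeds `Λ'(z)`.
-/

/-- The power mean of order `r` of `a` and `b`. -/
noncomputable def powerMean (r a b : ℝ) : ℝ := ((a ^ r + b ^ r) / 2) ^ (1 / r)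

/-- The geometric mean of `a` and `b`. -/
noncomputable def geomMean (a b : ℝ) : ℝ := Real.sqrt (a * b)

open Real Set

section DerivSign

variable {D : Set ℝ} {f f' : ℝ → ℝ}

lemma strictMonoOn_of_hasDerivAt_pos (hD : Convex ℝ D) (hf : ∀ x ∈ D, HasDerivAt f (f' x) x)
    (hf' : ∀ x ∈ interior D, 0 < f' x) : StrictMonoOn f D :=
  strictMonoOn_of_hasDerivWithinAt_pos hD (fun x hx ↦ (hf x hx).continuousAt.continuousWithinAt)
    (fun x hx ↦ (hf x (interior_subset hx)).hasDerivWithinAt) hf'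

lemma monotoneOn_of_hasDerivAt_nonneg (hD : Convex ℝ D) (hf : ∀ x ∈ D, HasDerivAt f (f' x) x)
    (hf' : ∀ x ∈ interior D, 0 ≤ f' x) : MonotoneOn f D :=
  monotoneOn_of_hasDerivWithinAt_nonneg hD (fun x hx ↦ (hf x hx).continuousAt.continuousWithinAt)
    (fun x hx ↦ (hf x (interior_subset hx)).hasDerivWithinAt) hf'

lemma antitoneOn_of_hasDerivAt_nonpos (hD : Convex ℝ D) (hf : ∀ x ∈ D, HasDerivAt f (f' x) x)
    (hf' : ∀ x ∈ interior D, f' x ≤ 0) : AntitoneOn f D :=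
  antitoneOn_of_hasDerivWithinAt_nonpos hD (fun x hx ↦ (hf x hx).continuousAt.continuousWithinAt)
    (fun x hx ↦ (hf x (interior_subset hx)).hasDerivWithinAt) hf'

end DerivSign

lemma sinh_lt_mul_cosh {x : ℝ} (hx : 0 < x) : sinh x < x * cosh x := by
  have hmono : StrictMonoOn (fun x ↦ x * cosh x - sinh x) (Ici 0) :=
    strictMonoOn_of_hasDerivAt_pos (f' := fun x ↦ x * sinh x) (convex_Ici 0)
      (fun x _ ↦ (((hasDerivAt_id' x).mul (hasDerivAt_cosh x)).sub
        (hasDerivAt_sinh x)).congr_deriv (by ring))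
      (fun x hx ↦ by rw [interior_Ici] at hx; exact mul_pos hx (sinh_pos_iff.2 hx))
  have := hmono self_mem_Ici hx.le hx
  simp only [zero_mul, sinh_zero, sub_zero] at this
  linarith

lemma le_sinh_mul_cosh {x : ℝ} (hx : 0 ≤ x) : x ≤ sinh x * cosh x := by
  have := self_le_sinh_iff.2 (by positivity : 0 ≤ 2 * x)
  rw [sinh_two_mul] at this
  linarith

lemma mul_sinh_div_cosh_le_two_mul_log_cosh {x : ℝ} (hx : 0 ≤ x) :
    x * sinh x / cosh x ≤ 2 * log (cosh x) := by
  have hderiv (x : ℝ) : HasDerivAt (fun x ↦ 2 * log (cosh x) - x * sinh x / cosh x)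
      ((sinh x * cosh x - x) / cosh x ^ 2) x := by
    have hc := (cosh_pos x).ne'
    refine ((((hasDerivAt_cosh x).log hc).const_mul 2).sub
      (((hasDerivAt_id' x).mul (hasDerivAt_sinh x)).div (hasDerivAt_cosh x) hc)).congr_deriv ?_
    simp only [Pi.mul_apply]
    field_simp
    linear_combination (-x) * cosh_sq_sub_sinh_sq x
  have hmono := monotoneOn_of_hasDerivAt_nonneg (convex_Ici 0) (fun x _ ↦ hderiv x)
    (fun x hx ↦ by
      rw [interior_Ici] at hx
      exact div_nonneg (sub_nonneg.2 (le_sinh_mul_cosh (le_of_lt hx))) (by positivity))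
  have := hmono self_mem_Ici hx hx
  simp only [cosh_zero, log_one, mul_zero, zero_mul, zero_div, sub_zero] at this
  linarith

lemma three_mul_sinh_mul_cosh_lt {x : ℝ} (hx : 0 < x) :
    3 * (sinh x * cosh x) < 3 * x + 2 * x * sinh x ^ 2 := by
  have hderiv (x : ℝ) : HasDerivAt (fun x ↦ 3 * x + 2 * x * sinh x ^ 2 - 3 * (sinh x * cosh x))
      (4 * sinh x * (x * cosh x - sinh x)) x := by
    refine ((((hasDerivAt_id' x).const_mul 3).add
      (((hasDerivAt_id' x).const_mul 2).mul ((hasDerivAt_sinh x).pow 2))).sub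
      (((hasDerivAt_sinh x).mul (hasDerivAt_cosh x)).const_mul 3)).congr_deriv ?_
    simp only [Pi.pow_apply]
    push_cast
    linear_combination (-3) * cosh_sq_sub_sinh_sq x
  have hmono := strictMonoOn_of_hasDerivAt_pos (convex_Ici 0) (fun x _ ↦ hderiv x)
    (fun x hx ↦ by
      rw [interior_Ici] at hx
      have := sinh_pos_iff.2 hx
      have := sub_pos.2 (sinh_lt_mul_cosh hx)
      positivity)
  have := hmono self_mem_Ici hx.le hx
  simp only [mul_zero, sinh_zero, zero_mul, add_zero, sub_zero] at this
  linarith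

lemma two_mul_log_cosh_add_sq_div_cosh_sq_le {x : ℝ} (hx : 0 ≤ x) :
    2 * log (cosh x) + x ^ 2 / cosh x ^ 2 ≤ 2 * x * sinh x / cosh x := by
  have hderiv (x : ℝ) : HasDerivAt
      (fun x ↦ 2 * x * sinh x / cosh x - 2 * log (cosh x) - x ^ 2 / cosh x ^ 2)
      (2 * x ^ 2 * sinh x / cosh x ^ 3) x := by
    have hc := (cosh_pos x).ne'
    refine (((((hasDerivAt_id' x).const_mul 2).mul (hasDerivAt_sinh x)).div (hasDerivAt_cosh x) hc
      |>.sub (((hasDerivAt_cosh x).log hc).const_mul 2)).sub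
      ((hasDerivAt_pow 2 x).div ((hasDerivAt_cosh x).pow 2) (pow_ne_zero 2 hc))).congr_deriv ?_
    simp only [Pi.mul_apply, Pi.pow_apply]
    field_simp
    push_cast
    linear_combination 2 * x * cosh x ^ 2 * cosh_sq_sub_sinh_sq x
  have hmono := monotoneOn_of_hasDerivAt_nonneg (convex_Ici 0) (fun x _ ↦ hderiv x)
    (fun x hx ↦ by
      rw [interior_Ici] at hx
      have := sinh_pos_iff.2 hx
      positivity)
  have := hmono self_mem_Ici hx hx
  simp only [mul_zero, sinh_zero, cosh_zero, log_one, zero_div, sub_zero, ne_eq,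
    OfNat.ofNat_ne_zero, not_false_eq_true, zero_pow] at this
  linarith

lemma one_div_sub_one_div_sinh_mul_cosh_lt {x : ℝ} (hx : 0 < x) :
    1 / x - 1 / (sinh x * cosh x) < 2 / 3 * (sinh x / cosh x) := by
  have hs := sinh_pos_iff.2 hx
  have hc := cosh_pos x
  have h : 2 / 3 * (sinh x / cosh x) - (1 / x - 1 / (sinh x * cosh x)) =
      (3 * x + 2 * x * sinh x ^ 2 - 3 * (sinh x * cosh x)) / (3 * x * (sinh x * cosh x)) := by
    field_simp
    ring
  have := div_pos (sub_pos.2 (three_mul_sinh_mul_cosh_lt hx))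
    (by positivity : 0 < 3 * x * (sinh x * cosh x))
  linarith

noncomputable def logCoshDiv (w : ℝ) : ℝ := log (cosh w) / w

noncomputable def logDivTanh (w : ℝ) : ℝ := log w - log (sinh w / cosh w)

lemma hasDerivAt_logCoshDiv {w : ℝ} (hw : w ≠ 0) :
    HasDerivAt logCoshDiv ((w * sinh w / cosh w - log (cosh w)) / w ^ 2) w := by
  have hc := (cosh_pos w).ne'
  refine (((hasDerivAt_cosh w).log hc).div (hasDerivAt_id' w) hw).congr_deriv ?_
  field_simp

lemma antitoneOn_deriv_logCoshDiv :
    AntitoneOn (fun w ↦ (w * sinh w / cosh w - log (cosh w)) / w ^ 2) (Ioi 0) := by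
  refine antitoneOn_of_hasDerivAt_nonpos
    (f' := fun w ↦ -(2 * w * sinh w / cosh w - 2 * log (cosh w) - w ^ 2 / cosh w ^ 2) / w ^ 3)
    (convex_Ioi 0) (fun w hw ↦ ?_) (fun w hw ↦ ?_)
  · have hw0 : w ≠ 0 := ne_of_gt hw
    have hc := (cosh_pos w).ne'
    refine (((((hasDerivAt_id' w).mul (hasDerivAt_sinh w)).div (hasDerivAt_cosh w) hc).sub
      ((hasDerivAt_cosh w).log hc)).div (hasDerivAt_pow 2 w) (pow_ne_zero 2 hw.ne')).congr_deriv ?_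
    simp only [Pi.mul_apply, Pi.div_apply, Pi.sub_apply]
    field_simp
    push_cast
    linear_combination w ^ 3 * cosh_sq_sub_sinh_sq w
  · rw [interior_Ioi, mem_Ioi] at hw
    have := two_mul_log_cosh_add_sq_div_cosh_sq_le (le_of_lt hw)
    exact div_nonpos_of_nonpos_of_nonneg (by linarith) (by positivity)

lemma hasDerivAt_logDivTanh {w : ℝ} (hw : 0 < w) :
    HasDerivAt logDivTanh (1 / w - 1 / (sinh w * cosh w)) w := by
  have hs := (sinh_pos_iff.2 hw).ne'
  have hc := (cosh_pos w).ne'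
  refine ((hasDerivAt_log hw.ne').sub
    (((hasDerivAt_sinh w).div (hasDerivAt_cosh w) hc).log (div_ne_zero hs hc))).congr_deriv ?_
  simp only [Pi.div_apply]
  field_simp
  linear_combination (-w) * cosh_sq_sub_sinh_sq w

lemma monotoneOn_logDivTanh : MonotoneOn logDivTanh (Ioi 0) :=
  monotoneOn_of_hasDerivAt_nonneg (convex_Ioi 0) (fun _ hw ↦ hasDerivAt_logDivTanh hw)
    (fun w hw ↦ by
      rw [interior_Ioi] at hw
      have := sinh_pos_iff.2 hw
      exact sub_nonneg.2 (one_div_le_one_div_of_le hw (le_sinh_mul_cosh (le_of_lt hw))))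

lemma logDivTanh_sub_lt {y z : ℝ} (hy : 0 < y) (hyz : y < z) :
    logDivTanh z - logDivTanh y < 2 / 3 * (z - y) * (logCoshDiv y + logCoshDiv z) := by
  set A : ℝ → ℝ := fun w ↦ (w * sinh w / cosh w - log (cosh w)) / w ^ 2
  have hderiv : ∀ w ∈ Ici y, HasDerivAt
      (fun w ↦ 2 / 3 * (w - y) * (logCoshDiv y + logCoshDiv w) - logDivTanh w)
      (2 / 3 * (logCoshDiv y + logCoshDiv w + (w - y) * A w) - (1 / w - 1 / (sinh w * cosh w)))
      w := fun w hw ↦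
    ((((hasDerivAt_id' w).sub_const y).const_mul (2 / 3)).mul
      ((hasDerivAt_logCoshDiv (hy.trans_le hw).ne').const_add _)).sub
      (hasDerivAt_logDivTanh (hy.trans_le hw)) |>.congr_deriv (by ring)
  have hderiv_pos : ∀ w ∈ interior (Ici y),
      0 < 2 / 3 * (logCoshDiv y + logCoshDiv w + (w - y) * A w)
        - (1 / w - 1 / (sinh w * cosh w)) := by
    intro w hw
    rw [interior_Ici] at hw
    have hw0 : 0 < w := hy.trans hw
    have hA : A w ≤ A y := antitoneOn_deriv_logCoshDiv hy hw0 hw.le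
    have hAy : y * A y ≤ logCoshDiv y := by
      have h : y * A y = (y * sinh y / cosh y - log (cosh y)) / y := by
        simp only [A]
        field_simp
      rw [h, logCoshDiv]
      exact div_le_div_of_nonneg_right
        (by linarith [mul_sinh_div_cosh_le_two_mul_log_cosh hy.le]) hy.le
    have hAw : logCoshDiv w + w * A w = sinh w / cosh w := by
      simp only [A, logCoshDiv]
      field_simp
      ring
    -- the right side is `(ĉ y - y A w) + (ĉ w + w A w) ≥ (ĉ y - y A y) + tanh w`
    have hbracket : sinh w / cosh w ≤ logCoshDiv y + logCoshDiv w + (w - y) * A w := by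
      have := mul_le_mul_of_nonneg_left hA hy.le
      linarith
    linarith [one_div_sub_one_div_sinh_mul_cosh_lt hw0]
  have := strictMonoOn_of_hasDerivAt_pos (convex_Ici y) hderiv hderiv_pos self_mem_Ici hyz.le hyz
  simp only [sub_self, mul_zero, zero_mul, zero_sub] at this
  linarith

lemma logCoshDiv_pos {w : ℝ} (hw : 0 < w) : 0 < logCoshDiv w :=
  div_pos (log_pos (one_lt_cosh.2 hw.ne')) hw

lemma logDivTanh_sub_lt_mul {p t u : ℝ} (hp : 0 < p) (ht : 0 < t) (htp : t ≤ p + 3 / 2)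
    (hu : 0 < u) :
    logDivTanh (t * u) - logDivTanh (p * u) < u * (logCoshDiv (t * u) + logCoshDiv (p * u)) := by
  have hpos : 0 < logCoshDiv (t * u) + logCoshDiv (p * u) :=
    add_pos (logCoshDiv_pos (mul_pos ht hu)) (logCoshDiv_pos (mul_pos hp hu))
  rcases le_or_gt t p with htp' | hpt
  · have := monotoneOn_logDivTanh (mul_pos ht hu) (mul_pos hp hu)
      (mul_le_mul_of_nonneg_right htp' hu.le)
    linarith [mul_pos hu hpos]
  · calc logDivTanh (t * u) - logDivTanh (p * u)
        < 2 / 3 * (t * u - p * u) * (logCoshDiv (p * u) + logCoshDiv (t * u)) :=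
          logDivTanh_sub_lt (mul_pos hp hu) (mul_lt_mul_of_pos_right hpt hu)
      _ ≤ u * (logCoshDiv (t * u) + logCoshDiv (p * u)) := by
          rw [add_comm (logCoshDiv _)]
          exact mul_le_mul_of_nonneg_right (by nlinarith) hpos.le

/-- `cosh (r u) ^ (1 / r)`, the power mean of order `r` of `exp u` and `exp (-u)`. -/
noncomputable def coshMean (r u : ℝ) : ℝ := exp (log (cosh (r * u)) / r)

lemma coshMean_zero_right (r : ℝ) : coshMean r 0 = 1 := by
  simp [coshMean]

lemma coshMean_abs (r u : ℝ) : coshMean r |u| = coshMean r u := by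
  rcases abs_choice u with h | h <;> simp [coshMean, h]

lemma coshMean_neg (r u : ℝ) : coshMean (-r) u = (coshMean r u)⁻¹ := by
  simp only [coshMean, neg_mul, cosh_neg, div_neg, exp_neg]

lemma one_lt_coshMean {r u : ℝ} (hr : 0 < r) (hu : u ≠ 0) : 1 < coshMean r u :=
  one_lt_exp_iff.2 (div_pos (log_pos (one_lt_cosh.2 (mul_ne_zero hr.ne' hu))) hr)

lemma coshMean_lt_one {r u : ℝ} (hr : r < 0) (hu : u ≠ 0) : coshMean r u < 1 :=
  exp_lt_one_iff.2 (div_neg_of_pos_of_neg (log_pos (one_lt_cosh.2 (mul_ne_zero hr.ne hu))) hr)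

lemma hasDerivAt_coshMean {r : ℝ} (hr : r ≠ 0) (u : ℝ) :
    HasDerivAt (coshMean r) (coshMean r u * (sinh (r * u) / cosh (r * u))) u := by
  have hc := (cosh_pos (r * u)).ne'
  refine ((((hasDerivAt_cosh (r * u)).comp u ((hasDerivAt_id' u).const_mul r)).log hc).div_const r
    |>.exp).congr_deriv ?_
  simp only [coshMean, Function.comp_apply]
  field_simp

lemma mul_tanh_div_coshMean_lt {p t u : ℝ} (hp : 0 < p) (ht : 0 < t) (htp : t ≤ p + 3 / 2)
    (hu : 0 < u) :
    t * (sinh (p * u) / cosh (p * u)) / coshMean p u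
      < p * (coshMean t u * (sinh (t * u) / cosh (t * u))) := by
  have hpu := mul_pos hp hu
  have htu := mul_pos ht hu
  have hL : t * (sinh (p * u) / cosh (p * u)) / coshMean p u
      = exp (log t + log (sinh (p * u) / cosh (p * u)) - log (cosh (p * u)) / p) := by
    have := sinh_pos_iff.2 hpu
    rw [exp_sub, exp_add, exp_log ht, exp_log (by positivity), coshMean]
  have hR : p * (coshMean t u * (sinh (t * u) / cosh (t * u)))
      = exp (log p + (log (cosh (t * u)) / t + log (sinh (t * u) / cosh (t * u)))) := by
    have := sinh_pos_iff.2 htu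
    rw [exp_add, exp_add, exp_log hp, exp_log (by positivity), coshMean]
  have hkey := logDivTanh_sub_lt_mul hp ht htp hu
  have hct : u * logCoshDiv (t * u) = log (cosh (t * u)) / t := by
    unfold logCoshDiv; field_simp
  have hcp : u * logCoshDiv (p * u) = log (cosh (p * u)) / p := by
    unfold logCoshDiv; field_simp
  simp only [logDivTanh, log_mul ht.ne' hu.ne', log_mul hp.ne' hu.ne'] at hkey
  rw [hL, hR, exp_lt_exp]
  linarith

lemma div_lt_coshMean_sub_one_div {s t u : ℝ} (hs : s < 0) (ht : 0 < t) (hst : t ≤ 3 / 2 - s)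
    (hu : 0 < u) :
    s / t < (coshMean s u - 1) / (coshMean t u - 1) := by
  rw [div_lt_div_iff₀ ht (sub_pos.2 (one_lt_coshMean ht hu.ne'))]
  have hderiv (v : ℝ) : HasDerivAt (fun v ↦ (coshMean s v - 1) * t - s * (coshMean t v - 1))
      (coshMean s v * (sinh (s * v) / cosh (s * v)) * t
        - s * (coshMean t v * (sinh (t * v) / cosh (t * v)))) v :=
    (((hasDerivAt_coshMean hs.ne v).sub_const 1).mul_const t).sub
      (((hasDerivAt_coshMean ht.ne' v).sub_const 1).const_mul s)
  have hderiv_pos (v : ℝ) (hv : v ∈ interior (Ici 0)) :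
      0 < coshMean s v * (sinh (s * v) / cosh (s * v)) * t
        - s * (coshMean t v * (sinh (t * v) / cosh (t * v))) := by
    rw [interior_Ici] at hv
    have := mul_tanh_div_coshMean_lt (neg_pos.2 hs) ht (by linarith) hv
    rw [coshMean_neg, div_inv_eq_mul, neg_mul, sinh_neg, cosh_neg, neg_div] at this
    linarith
  have := strictMonoOn_of_hasDerivAt_pos (convex_Ici 0) (fun v _ ↦ hderiv v) hderiv_pos
    self_mem_Ici hu.le hu
  simp only [coshMean_zero_right, sub_self, zero_mul, mul_zero] at this
  linarith

lemma powerMean_eq_geomMean_mul_coshMean {r a b : ℝ} (hr : r ≠ 0) (ha : 0 < a) (hb : 0 < b) :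
    powerMean r a b = geomMean a b * coshMean r ((log a - log b) / 2) := by
  set m := (log a + log b) / 2
  set d := (log a - log b) / 2
  have hmean : (a ^ r + b ^ r) / 2 = exp (r * m) * cosh (r * d) := by
    rw [rpow_def_of_pos ha, rpow_def_of_pos hb, cosh_eq, show log a * r = r * m + r * d by ring,
      show log b * r = r * m - r * d by ring, exp_add, exp_sub, exp_neg]
    field_simp
  have hgeom : geomMean a b = exp m := by
    have hab : a * b = exp m ^ 2 := by
      rw [sq, ← exp_add, show m + m = log a + log b by ring, exp_add, exp_log ha, exp_log hb]
    rw [geomMean, hab, sqrt_sq (exp_pos m).le]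
  rw [powerMean, hmean, rpow_def_of_pos (by positivity), log_mul (exp_pos _).ne' (cosh_pos _).ne',
    log_exp, hgeom, coshMean, ← exp_add]
  congr 1
  field_simp

theorem ratio_bounds_p_one_mixed_general (s t : ℝ)
    (hs0 : s < 0) (h0t : 0 < t) (ht32 : t ≤ 3 / 2 - s) :
    ∀ a b : ℝ, 0 < a → 0 < b → a ≠ b →
      s / t < (powerMean s a b - geomMean a b) / (powerMean t a b - geomMean a b) ∧
      (powerMean s a b - geomMean a b) / (powerMean t a b - geomMean a b) < 0 := by
  intro a b ha hb hab
  set u := |(log a - log b) / 2|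
  have hu : 0 < u :=
    abs_pos.2 (div_ne_zero (sub_ne_zero.2 (log_injOn_pos.ne ha hb hab)) two_ne_zero)
  have hG : 0 < geomMean a b := sqrt_pos.2 (mul_pos ha hb)
  rw [powerMean_eq_geomMean_mul_coshMean hs0.ne ha hb,
    powerMean_eq_geomMean_mul_coshMean h0t.ne' ha hb, ← coshMean_abs s, ← coshMean_abs t,
    ← mul_sub_one, ← mul_sub_one, mul_div_mul_left _ _ hG.ne']
  exact ⟨div_lt_coshMean_sub_one_div hs0 h0t ht32 hu,
    div_neg_of_neg_of_pos (sub_neg.2 (coshMean_lt_one hs0 hu.ne'))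
      (sub_pos.2 (one_lt_coshMean h0t hu.ne'))⟩

/-- Corollary 3.2(b). -/
theorem ratio_bounds_p_one_mixed (s t : ℝ) (hs : s ≠ 0) (ht : t ≠ 0)
    (hs0 : s < 0) (h0t : 0 < t) (ht32 : t ≤ 3 / 2 - s) :
    ∀ a b : ℝ, 0 < a → 0 < b → a ≠ b →
      s / t < (powerMean s a b - geomMean a b) / (powerMean t a b - geomMean a b) ∧
      (powerMean s a b - geomMean a b) / (powerMean t a b - geomMean a b) < 0 :=
  ratio_bounds_p_one_mixed_general s t hs0 h0t ht32
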